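/- arXiv:1205.4749 — 2 statements merged into one kernel-verified Lean document; each statement's English description precedes it below -/
import Mathlib

section
/- Let T = (V,E) be a finite tree, β ≥ 0, B : V → ℝ external fields, and let ν be the Ising measure on T with parameters β, B. Then for every edge {i,j} ∈ E, ⟨x_i·x_j⟩_ν = (tanh β + m_{i→j} m_{j→i})/(1 + tanh β · m_{i→j} m_{j→i}). -/
open Real Finset

attribute [local instance] Classical.propDecidable

/-- the inverse hyperbolic tangent `atanh x = ½ log((1+x)/(1-x))`. -/
noncomputable def atanh (x : ℝ) : ℝ := (1 / 2) * Real.log ((1 + x) / (1 - x))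

/-- spin value of a Boolean: `true ↦ +1`, `false ↦ -1`. -/
def spin (b : Bool) : ℝ := if b then 1 else -1

/-- the product `x_i x_j` of the spins at the two endpoints of an edge. -/
def edgeTerm {V : Type} (x : V → Bool) : Sym2 V → ℝ :=
  Sym2.lift ⟨fun i j => spin (x i) * spin (x j), fun i j => by ring⟩

variable {V : Type} [Fintype V]

/-- Ising Hamiltonian `β Σ_{(i,j)∈E} x_i x_j + Σ_i B_i x_i`. -/
noncomputable def ham (G : SimpleGraph V) (β : ℝ) (B : V → ℝ) (x : V → Bool) : ℝ :=
  β * ∑ e ∈ G.edgeFinset, edgeTerm x e + ∑ v, B v * spin (x v)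

/-- expectation `⟨f⟩` under the Ising measure `ν^{β,B}_G` on `{-1,+1}^V`. -/
noncomputable def isingExp (G : SimpleGraph V) (β : ℝ) (B : V → ℝ)
    (f : (V → Bool) → ℝ) : ℝ :=
  (∑ x : V → Bool, f x * Real.exp (ham G β B x)) /
    (∑ x : V → Bool, Real.exp (ham G β B x))

/-- `T_{i→j}` : the connected component of `i` in the graph obtained from `T`
by deleting the edge `{i,j}` (kept as a graph on the ambient vertex set;
vertices outside the component are isolated). -/
def msgGraph (T : SimpleGraph V) (i j : V) : SimpleGraph V where
  Adj a b := (T.deleteEdges {s(i, j)}).Adj a b ∧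
      (T.deleteEdges {s(i, j)}).Reachable a i ∧ (T.deleteEdges {s(i, j)}).Reachable b i
  symm := ⟨fun a b ⟨h, ha, hb⟩ => ⟨h.symm, hb, ha⟩⟩
  loopless := ⟨fun a h => (T.deleteEdges {s(i, j)}).loopless.irrefl a h.1⟩

/-- the external fields `B` restricted to the component `T_{i→j}` (zero elsewhere). -/
noncomputable def msgField (T : SimpleGraph V) (B : V → ℝ) (i j : V) : V → ℝ :=
  fun v => if (T.deleteEdges {s(i, j)}).Reachable v i then B v else 0

/-- the message `m_{i→j}`, i.e. `⟨x_i⟩` under the Ising measure on `T_{i→j}`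
with inverse temperature `β` and fields `B` restricted to `T_{i→j}`. -/
noncomputable def msg (T : SimpleGraph V) (β : ℝ) (B : V → ℝ) (i j : V) : ℝ :=
  isingExp (msgGraph T i j) β (msgField T B i j) (fun x => spin (x i))

/-! The edge `{i,j}` of a tree is a bridge, so the Hamiltonian splits as `β x_i x_j` plus two
Hamiltonians living on the two sides `T_{i→j}` and `T_{j→i}`, and summing over configurations
factorises over the two sides. Writing `e^{β x_i x_j} = cosh β (1 + tanh β · x_i x_j)`, the
partition function and the numerator of `⟨x_i x_j⟩` become `cosh β (Z₁Z₂ + tanh β · M₁M₂)` and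
`cosh β (M₁M₂ + tanh β · Z₁Z₂)` (up to a common factor), where `Mₖ / Zₖ` are the two messages. -/

section Factorization

variable {ι α : Type*} [Fintype ι] [DecidableEq ι] [Fintype α]

theorem sum_mul_mul_card_eq_sum_mul_sum (s : Set ι) {F G : (ι → α) → ℝ}
    (hF : ∀ x y, Set.EqOn x y s → F x = F y) (hG : ∀ x y, Set.EqOn x y sᶜ → G x = G y) :
    (∑ x, F x * G x) * Fintype.card (ι → α) = (∑ x, F x) * ∑ x, G x := by
  classical
  let mix : (ι → α) → (ι → α) → ι → α := fun x y v => if v ∈ s then x v else y v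
  have hmix_left : ∀ x y, Set.EqOn (mix x y) x s := fun x y v hv => if_pos hv
  have hmix_right : ∀ x y, Set.EqOn (mix y x) x sᶜ := fun x y v hv => if_neg hv
  -- exchanging the `sᶜ`-coordinates of a pair of configurations is an involution
  let σ : Equiv.Perm ((ι → α) × (ι → α)) :=
    Function.Involutive.toPerm (fun p => (mix p.1 p.2, mix p.2 p.1)) fun p => by
      ext v <;> by_cases hv : v ∈ s <;> simp [mix, hv]
  calc (∑ x, F x * G x) * Fintype.card (ι → α)
      = ∑ p : (ι → α) × (ι → α), F p.1 * G p.1 := by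
        rw [Fintype.sum_prod_type, Finset.sum_mul]
        simp [mul_comm]
    _ = ∑ p, F (σ p).1 * G (σ p).2 := by
        refine Finset.sum_congr rfl fun p _ => ?_
        show _ = F (mix p.1 p.2) * G (mix p.2 p.1)
        rw [hF _ _ (hmix_left p.1 p.2), hG _ _ (hmix_right p.1 p.2)]
    _ = ∑ p : (ι → α) × (ι → α), F p.1 * G p.2 := Equiv.sum_comp σ fun p => F p.1 * G p.2
    _ = (∑ x, F x) * ∑ x, G x := by rw [Fintype.sum_prod_type, Finset.sum_mul_sum]

end Factorization

lemma spin_mul_self (b : Bool) : spin b * spin b = 1 := by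
  cases b <;> simp [spin]

lemma exp_mul_spin_mul_spin (β : ℝ) (a b : Bool) :
    exp (β * (spin a * spin b)) = cosh β + sinh β * (spin a * spin b) := by
  cases a <;> cases b <;> simp [spin, ← sub_eq_add_neg, cosh_add_sinh, cosh_sub_sinh]

section Hamiltonian

variable {V : Type} [Fintype V]

lemma ham_sup {G H : SimpleGraph V} (hGH : Disjoint G H) (β : ℝ) (B C : V → ℝ) (x : V → Bool) :
    ham (G ⊔ H) β (B + C) x = ham G β B x + ham H β C x := by
  simp only [ham, SimpleGraph.edgeFinset_sup,
    Finset.sum_union (SimpleGraph.disjoint_edgeFinset.mpr hGH), Pi.add_apply, add_mul,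
    Finset.sum_add_distrib]
  ring

lemma ham_sup_edge {G : SimpleGraph V} {i j : V} (hij : i ≠ j) (hG : ¬ G.Adj i j) (β : ℝ)
    (B : V → ℝ) (x : V → Bool) :
    ham (G ⊔ SimpleGraph.edge i j) β B x = β * (spin (x i) * spin (x j)) + ham G β B x := by
  simp only [ham, SimpleGraph.edgeFinset_sup_edge, hG, hij, not_false_eq_true, ne_eq,
    Finset.sum_cons, edgeTerm, Sym2.lift_mk]
  ring

lemma ham_eq_of_eqOn {G : SimpleGraph V} {B : V → ℝ} {s : Set V} (hG : G.support ⊆ s)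
    (hB : Function.support B ⊆ s) (β : ℝ) {x y : V → Bool} (hxy : Set.EqOn x y s) :
    ham G β B x = ham G β B y := by
  unfold ham
  congr 2
  · refine Finset.sum_congr rfl fun e he => ?_
    induction e using Sym2.ind with
    | _ a b =>
      have hab : G.Adj a b := by simpa using he
      simp only [edgeTerm, Sym2.lift_mk, hxy (hG hab.left_mem_support),
        hxy (hG hab.right_mem_support)]
  · funext v
    by_cases hv : v ∈ s
    · rw [hxy hv]
    · rw [Function.notMem_support.mp (mt (@hB v) hv), zero_mul, zero_mul]

end Hamiltonian

section EdgeCorrelation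

variable {V : Type} [Fintype V] {G₁ G₂ : SimpleGraph V} {B₁ B₂ : V → ℝ} {s : Set V} {i j : V}

lemma sum_mul_exp_ham_mul_exp_ham (hi : i ∈ s) (hj : j ∉ s) (hG₁ : G₁.support ⊆ s)
    (hB₁ : Function.support B₁ ⊆ s) (hG₂ : G₂.support ⊆ sᶜ) (hB₂ : Function.support B₂ ⊆ sᶜ)
    (β : ℝ) (f₁ f₂ : Bool → ℝ) :
    ∑ x, f₁ (x i) * exp (ham G₁ β B₁ x) * (f₂ (x j) * exp (ham G₂ β B₂ x)) =
      (∑ x, f₁ (x i) * exp (ham G₁ β B₁ x)) * (∑ x, f₂ (x j) * exp (ham G₂ β B₂ x)) /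
        Fintype.card (V → Bool) := by
  refine eq_div_of_mul_eq (by positivity) (sum_mul_mul_card_eq_sum_mul_sum s (fun x y hxy => ?_)
    fun x y hxy => ?_)
  · rw [hxy hi, ham_eq_of_eqOn hG₁ hB₁ β hxy]
  · rw [hxy hj, ham_eq_of_eqOn hG₂ hB₂ β hxy]

theorem isingExp_spin_mul_spin_sup_edge (hi : i ∈ s) (hj : j ∉ s) (hG₁ : G₁.support ⊆ s)
    (hB₁ : Function.support B₁ ⊆ s) (hG₂ : G₂.support ⊆ sᶜ) (hB₂ : Function.support B₂ ⊆ sᶜ)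
    (β : ℝ) :
    isingExp (G₁ ⊔ G₂ ⊔ SimpleGraph.edge i j) β (B₁ + B₂) (fun x => spin (x i) * spin (x j)) =
      (tanh β + isingExp G₁ β B₁ (fun x => spin (x i)) * isingExp G₂ β B₂ (fun x => spin (x j))) /
        (1 + tanh β *
          (isingExp G₁ β B₁ (fun x => spin (x i)) * isingExp G₂ β B₂ (fun x => spin (x j)))) := by
  set w₁ : (V → Bool) → ℝ := fun x => exp (ham G₁ β B₁ x)
  set w₂ : (V → Bool) → ℝ := fun x => exp (ham G₂ β B₂ x)
  have hdisj : Disjoint G₁ G₂ :=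
    SimpleGraph.disjoint_of_disjoint_support (h := Disjoint.mono hG₁ hG₂ disjoint_compl_right)
  have hnadj : ¬ (G₁ ⊔ G₂).Adj i j := by
    rintro (h | h)
    · exact hj (hG₁ h.right_mem_support)
    · exact hG₂ h.left_mem_support hi
  have hw : ∀ x, exp (ham (G₁ ⊔ G₂ ⊔ SimpleGraph.edge i j) β (B₁ + B₂) x) =
      (cosh β + sinh β * (spin (x i) * spin (x j))) * (w₁ x * w₂ x) := fun x => by
    rw [ham_sup_edge (ne_of_mem_of_not_mem hi hj) hnadj, ham_sup hdisj, exp_add, exp_add,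
      exp_mul_spin_mul_spin]
  have hfactor := sum_mul_exp_ham_mul_exp_ham hi hj hG₁ hB₁ hG₂ hB₂ β
  have hfactor₀ : ∑ x, w₁ x * w₂ x = (∑ x, w₁ x) * (∑ x, w₂ x) / Fintype.card (V → Bool) := by
    simpa using hfactor (fun _ => 1) (fun _ => 1)
  have hZ : ∑ x, exp (ham (G₁ ⊔ G₂ ⊔ SimpleGraph.edge i j) β (B₁ + B₂) x) =
      cosh β * ∑ x, w₁ x * w₂ x + sinh β * ∑ x, spin (x i) * w₁ x * (spin (x j) * w₂ x) := by
    simp only [hw, Finset.mul_sum, ← Finset.sum_add_distrib]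
    exact Finset.sum_congr rfl fun x _ => by ring
  have hN : ∑ x, spin (x i) * spin (x j) *
        exp (ham (G₁ ⊔ G₂ ⊔ SimpleGraph.edge i j) β (B₁ + B₂) x) =
      cosh β * ∑ x, spin (x i) * w₁ x * (spin (x j) * w₂ x) + sinh β * ∑ x, w₁ x * w₂ x := by
    simp only [hw, Finset.mul_sum, ← Finset.sum_add_distrib]
    refine Finset.sum_congr rfl fun x _ => ?_
    linear_combination (sinh β * w₁ x * w₂ x * spin (x j) * spin (x j)) * spin_mul_self (x i) +
      (sinh β * w₁ x * w₂ x) * spin_mul_self (x j)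
  have hZ₁ : 0 < ∑ x, w₁ x := Finset.sum_pos (fun x _ => exp_pos _) Finset.univ_nonempty
  have hZ₂ : 0 < ∑ x, w₂ x := Finset.sum_pos (fun x _ => exp_pos _) Finset.univ_nonempty
  have hden : cosh β * ((∑ x, w₁ x) * (∑ x, w₂ x) / Fintype.card (V → Bool)) ≠ 0 := by
    positivity
  unfold isingExp
  rw [hN, hZ, hfactor, hfactor₀, tanh_eq_sinh_div_cosh, ← mul_div_mul_right _ (1 + _) hden]
  congr 1 <;> field_simp <;> ring

end EdgeCorrelation

namespace SimpleGraph

variable {V : Type} {T : SimpleGraph V} {i j : V}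

theorem Connected.reachable_deleteEdges_or (hT : T.Connected) (i j v : V) :
    (T.deleteEdges {s(i, j)}).Reachable v i ∨ (T.deleteEdges {s(i, j)}).Reachable v j := by
  obtain ⟨p⟩ := hT v i
  induction p with
  | nil => exact .inl .rfl
  | @cons a b i hab _ ih =>
    by_cases he : s(a, b) = s(i, j)
    · rcases Sym2.eq_iff.mp he with ⟨rfl, -⟩ | ⟨rfl, -⟩
      exacts [.inl .rfl, .inr .rfl]
    · have hab' : (T.deleteEdges {s(i, j)}).Adj a b := by simp [hab, he]
      exact ih.imp hab'.reachable.trans hab'.reachable.trans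

theorem deleteEdges_sup_edge (hij : T.Adj i j) : T.deleteEdges {s(i, j)} ⊔ edge i j = T :=
  sdiff_sup_cancel ((edge_le_iff T).mpr (.inr hij))

end SimpleGraph

section Messages

variable {V : Type} {T : SimpleGraph V} {i j : V}

/-- The vertex set of `T_{i→j}`. -/
def msgSide (T : SimpleGraph V) (i j : V) : Set V := {v | (T.deleteEdges {s(i, j)}).Reachable v i}

lemma mem_msgSide_self : i ∈ msgSide T i j := SimpleGraph.Reachable.refl i

lemma msgSide_subset_compl (hT : T.IsAcyclic) (hij : T.Adj i j) :
    msgSide T j i ⊆ (msgSide T i j)ᶜ := fun v hvj hvi => by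
  have hbridge : T.IsBridge s(i, j) := SimpleGraph.isAcyclic_iff_forall_adj_isBridge.mp hT hij
  rw [msgSide, Set.mem_ofPred_eq, Sym2.eq_swap] at hvj
  exact hbridge (hvi.symm.trans hvj)

lemma msgSide_union (hT : T.Connected) : msgSide T i j ∪ msgSide T j i = Set.univ := by
  refine Set.eq_univ_of_forall fun v => ?_
  simpa only [msgSide, Set.mem_union, Set.mem_ofPred_eq, Sym2.eq_swap (a := j)]
    using hT.reachable_deleteEdges_or i j v

lemma support_msgGraph_subset : (msgGraph T i j).support ⊆ msgSide T i j :=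
  fun _ ⟨_, h⟩ => h.2.1

lemma msgField_eq_indicator [Fintype V] (B : V → ℝ) :
    msgField T B i j = (msgSide T i j).indicator B := by
  funext v
  simp [msgField, msgSide, Set.indicator_apply]

lemma support_msgField_subset [Fintype V] (B : V → ℝ) :
    Function.support (msgField T B i j) ⊆ msgSide T i j := by
  rw [msgField_eq_indicator]
  exact Set.support_indicator_subset

lemma msgGraph_sup_msgGraph (hT : T.Connected) :
    msgGraph T i j ⊔ msgGraph T j i = T.deleteEdges {s(i, j)} := by
  ext a b
  simp only [SimpleGraph.sup_adj, msgGraph, Sym2.eq_swap (a := j)]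
  refine ⟨by rintro (⟨h, -⟩ | ⟨h, -⟩) <;> exact h, fun h => ?_⟩
  have hba := h.reachable.symm
  rcases hT.reachable_deleteEdges_or i j a with ha | ha
  exacts [.inl ⟨h, ha, hba.trans ha⟩, .inr ⟨h, ha, hba.trans ha⟩]

lemma msgField_add_msgField [Fintype V] (hT : T.IsTree) (hij : T.Adj i j) (B : V → ℝ) :
    msgField T B i j + msgField T B j i = B := by
  have h := Set.indicator_union_of_disjoint
    (Set.subset_compl_iff_disjoint_left.mp (msgSide_subset_compl hT.isAcyclic hij)) B
  rw [msgSide_union hT.connected, Set.indicator_univ] at h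
  rw [msgField_eq_indicator, msgField_eq_indicator]
  exact h.symm

end Messages

theorem edge_correlation_via_messages_general (T : SimpleGraph V) (hT : T.IsTree)
    (β : ℝ) (B : V → ℝ) (i j : V) (hij : T.Adj i j) :
    isingExp T β B (fun x => spin (x i) * spin (x j)) =
      (Real.tanh β + msg T β B i j * msg T β B j i) /
        (1 + Real.tanh β * (msg T β B i j * msg T β B j i)) := by
  have hside := msgSide_subset_compl hT.isAcyclic hij
  have key := isingExp_spin_mul_spin_sup_edge mem_msgSide_self (hside mem_msgSide_self)
    support_msgGraph_subset (support_msgField_subset B) (support_msgGraph_subset.trans hside)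
    ((support_msgField_subset B).trans hside) β
  rwa [msgGraph_sup_msgGraph hT.connected, SimpleGraph.deleteEdges_sup_edge hij,
    msgField_add_msgField hT hij] at key

/-- **Edge correlation via messages.**  For a finite tree `T`, `β ≥ 0`, fields `B`,
and the Ising measure `ν` on `T`, every edge `{i,j}` satisfies
`⟨x_i x_j⟩_ν = (tanh β + m_{i→j} m_{j→i}) / (1 + tanh β · m_{i→j} m_{j→i})`. -/
theorem edge_correlation_via_messages (T : SimpleGraph V) (hT : T.IsTree)
    (β : ℝ) (hβ : 0 ≤ β) (B : V → ℝ) (i j : V) (hij : T.Adj i j) :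
    isingExp T β B (fun x => spin (x i) * spin (x j)) =
      (Real.tanh β + msg T β B i j * msg T β B j i) /
        (1 + Real.tanh β * (msg T β B i j * msg T β B j i)) :=
  edge_correlation_via_messages_general T hT β B i j hij
end

section
/- Let T = (V,E) be a finite tree, β ≥ 0, B : V → ℝ external fields, and let ν be the Ising measure on T with parameters β, B. Let U' ⊆ V be such that the induced subgraph T[U'] is connected, set W = V \ U', and let ∂_*U' be the set of vertices of U' having a neighbor in W. For u ∈ ∂_*U', let T_u be the connected component of u in the subgraph of T induced by W ∪ {u}, and let ⟨x_u⟩_W denote the expectation of x_u under the Ising measure on T_u with parameters β and B restricted to T_u. Then the marginal of ν on {−1,+1}^{U'} is the Ising measure on the induced subgraph T[U'] with inverse temperature β and external fields B'_u = atanh(⟨x_u⟩_W) for u ∈ ∂_*U' and B'_u = B_u for u ∈ U' \ ∂_*U'. -/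
/-!
Fix the spins on `U'` to `x`. Since `T` is a tree and `T[U']` is connected, the vertices outside
`U'` split into the branches `T_u`, `u ∈ ∂_*U'`, which pairwise share no vertex and meet `U'` only
in their root `u`. Hence the Hamiltonian of `T` is that of `T[U']` plus one term per branch, and
summing out the spins outside `U'` factorises into the partition functions `Z_u(x_u)` of the
branches with pinned root. As `Z_u(c) = √(Z_u(+1) Z_u(-1)) · exp (atanh ⟨x_u⟩_W · c)`, each branch
acts on `x` as an extra field `atanh ⟨x_u⟩_W - B_u` at `u`, up to a factor independent of `x`.
-/

open Real Finset

attribute [local instance] Classical.propDecidable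

variable {V : Type} [Fintype V]

/-- the `ν^{β,B}_G`-probability that a configuration agrees with `x` on the set `S`. -/
noncomputable def isingProbAgree (G : SimpleGraph V) (β : ℝ) (B : V → ℝ)
    (S : Set V) (x : V → Bool) : ℝ :=
  (∑ z : V → Bool, (if ∀ u ∈ S, z u = x u then Real.exp (ham G β B z) else 0)) /
    (∑ z : V → Bool, Real.exp (ham G β B z))

/-- the subgraph of `T` induced by the vertex set `S`, kept as a graph on the
ambient vertex set (vertices outside `S` are isolated). -/
def onSet (T : SimpleGraph V) (S : Set V) : SimpleGraph V where
  Adj a b := T.Adj a b ∧ a ∈ S ∧ b ∈ S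
  symm := ⟨fun a b ⟨h, ha, hb⟩ => ⟨h.symm, hb, ha⟩⟩
  loopless := ⟨fun a h => T.loopless.irrefl a h.1⟩

/-- the connected component of `u` in `G`, as a graph on the ambient vertex set. -/
def compAt (G : SimpleGraph V) (u : V) : SimpleGraph V where
  Adj a b := G.Adj a b ∧ G.Reachable a u ∧ G.Reachable b u
  symm := ⟨fun a b ⟨h, ha, hb⟩ => ⟨h.symm, hb, ha⟩⟩
  loopless := ⟨fun a h => G.loopless.irrefl a h.1⟩

/-- `⟨x_u⟩_W` : the magnetization at `u` for the Ising measure on `T_u`, the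
connected component of `u` in the subgraph of `T` induced by `W ∪ {u}` (where
`W = V \ U'`), with inverse temperature `β` and fields `B` restricted to `T_u`. -/
noncomputable def bdryMag (T : SimpleGraph V) (β : ℝ) (B : V → ℝ)
    (U' : Set V) (u : V) : ℝ :=
  isingExp (compAt (onSet T (U'ᶜ ∪ {u})) u) β
    (fun v => if (onSet T (U'ᶜ ∪ {u})).Reachable v u then B v else 0)
    (fun x => spin (x u))

section ConfigurationSums

variable {α : Type*} [Fintype α]

noncomputable def swapOn (S : Set V) : (V → α) × (V → α) ≃ (V → α) × (V → α) where
  toFun p := (S.piecewise p.2 p.1, S.piecewise p.1 p.2)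
  invFun p := (S.piecewise p.2 p.1, S.piecewise p.1 p.2)
  left_inv p := by ext v <;> by_cases hv : v ∈ S <;> simp [hv]
  right_inv p := by ext v <;> by_cases hv : v ∈ S <;> simp [hv]

theorem sum_mul_sum_eq_card_mul_sum_mul {S : Set V} {g h : (V → α) → ℝ}
    (hg : DependsOn g S) (hh : DependsOn h Sᶜ) :
    (∑ z, g z) * (∑ z, h z) = Fintype.card (V → α) * ∑ z, g z * h z := by
  have hswap : ∀ p : (V → α) × (V → α), g p.2 * h p.1 = g (swapOn S p).1 * h (swapOn S p).1 := by
    intro p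
    congr 1
    · exact hg fun v hv => by simp [swapOn, hv]
    · exact hh fun v hv => by simp [swapOn, show v ∉ S from hv]
  calc (∑ z, g z) * (∑ z, h z) = ∑ p : (V → α) × (V → α), g p.2 * h p.1 := by
        rw [Fintype.sum_mul_sum, Fintype.sum_prod_type, Finset.sum_comm]
    _ = ∑ p : (V → α) × (V → α), g p.1 * h p.1 := by
        simp_rw [hswap]; exact Equiv.sum_comp (swapOn S) fun p => g p.1 * h p.1
    _ = Fintype.card (V → α) * ∑ z, g z * h z := by
        rw [Fintype.sum_prod_type, Finset.sum_comm]; simp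

omit [Fintype V] [Fintype α] in
theorem DependsOn.finset_prod {ι : Type*} {s : Finset ι} {S : Set V} {f : ι → (V → α) → ℝ}
    (hf : ∀ i ∈ s, DependsOn (f i) S) : DependsOn (fun z => ∏ i ∈ s, f i z) S :=
  fun _ _ hzz => Finset.prod_congr rfl fun i hi => hf i hi hzz

theorem card_pow_mul_sum_prod {ι : Type*} (s : Finset ι) {S : ι → Set V}
    {f : ι → (V → α) → ℝ} (hS : (s : Set ι).PairwiseDisjoint S)
    (hf : ∀ i ∈ s, DependsOn (f i) (S i)) :
    (Fintype.card (V → α) : ℝ) ^ s.card * ∑ z, ∏ i ∈ s, f i z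
      = Fintype.card (V → α) * ∏ i ∈ s, ∑ z, f i z := by
  induction s using Finset.induction with
  | empty => simp
  | @insert i s hi ih =>
    have hrest : DependsOn (fun z => ∏ j ∈ s, f j z) (S i)ᶜ :=
      DependsOn.finset_prod fun j hj => (hf j (Finset.mem_insert_of_mem hj)).mono fun _ hv =>
        Set.disjoint_right.mp (hS (by simp) (by simp [hj]) (ne_of_mem_of_not_mem hj hi).symm) hv
    have key := sum_mul_sum_eq_card_mul_sum_mul (hf i (Finset.mem_insert_self i s)) hrest
    have ih' := ih (hS.subset (by simp)) fun j hj => hf j (Finset.mem_insert_of_mem hj)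
    simp_rw [Finset.card_insert_of_notMem hi, Finset.prod_insert hi]
    calc (Fintype.card (V → α) : ℝ) ^ (s.card + 1) * ∑ z, f i z * ∏ j ∈ s, f j z
        = (Fintype.card (V → α) : ℝ) ^ s.card * ((∑ z, f i z) * ∑ z, ∏ j ∈ s, f j z) := by
          rw [key]; ring
      _ = Fintype.card (V → α) * ((∑ z, f i z) * ∏ j ∈ s, ∑ z, f j z) := by
          rw [mul_left_comm, ih', mul_left_comm]

variable [DecidableEq α]

theorem sum_update_eq_card_mul (f : (V → α) → ℝ) (u : V) (c : α) :
    ∑ z, f (Function.update z u c) = Fintype.card α * ∑ z, if z u = c then f z else 0 := by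
  set e := (Equiv.funSplitAt u α).symm
  have hupd : ∀ (a : α) (r : {v // v ≠ u} → α), Function.update (e (a, r)) u c = e (c, r) := by
    intro a r; ext v; by_cases hv : v = u <;> simp [e, hv]
  rw [← e.sum_comp, ← e.sum_comp, Fintype.sum_prod_type, Fintype.sum_prod_type]
  simp [e, hupd, Finset.sum_ite_eq']

noncomputable def agreeSum (S : Set V) (x : V → α) (w : (V → α) → ℝ) : ℝ :=
  ∑ z, if ∀ u ∈ S, z u = x u then w z else 0

theorem agreeSum_congr {S : Set V} {x : V → α} {w w' : (V → α) → ℝ}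
    (h : ∀ z, (∀ u ∈ S, z u = x u) → w z = w' z) : agreeSum S x w = agreeSum S x w' :=
  Finset.sum_congr rfl fun z _ => by split_ifs with hz; exacts [h z hz, rfl]

theorem agreeSum_mul_of_dependsOn {S : Set V} {g : (V → α) → ℝ} (hg : DependsOn g S)
    (x : V → α) (h : (V → α) → ℝ) :
    agreeSum S x (fun z => g z * h z) = g x * agreeSum S x h := by
  rw [agreeSum, agreeSum, Finset.mul_sum]
  refine Finset.sum_congr rfl fun z _ => ?_
  split_ifs with hz
  · rw [hg hz]
  · rw [mul_zero]

theorem card_mul_agreeSum_of_dependsOn_compl {S : Set V} {h : (V → α) → ℝ}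
    (hh : DependsOn h Sᶜ) (x : V → α) :
    Fintype.card (V → α) * agreeSum S x h = agreeSum S x 1 * ∑ z, h z := by
  have hagree : DependsOn (fun z : V → α => if ∀ u ∈ S, z u = x u then (1 : ℝ) else 0) S :=
    fun z z' hzz => by simp +contextual only [hzz]
  simp only [agreeSum, Pi.one_apply, sum_mul_sum_eq_card_mul_sum_mul hagree hh, ite_mul, one_mul,
    zero_mul]

theorem agreeSum_one_eq (S : Set V) (x y : V → α) : agreeSum S x 1 = agreeSum S y 1 := by
  rw [agreeSum, agreeSum, ← (Equiv.piCongrRight fun v => Equiv.swap (x v) (y v)).sum_comp]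
  simp [Equiv.swap_apply_eq_iff]

theorem agreeSum_one_pos (S : Set V) (x : V → α) : 0 < agreeSum S x 1 :=
  Finset.sum_pos' (fun z _ => by simp only [Pi.one_apply]; positivity)
    ⟨x, Finset.mem_univ x, by simp⟩

theorem sum_agreeSum (S : Set V) (w : (V → α) → ℝ) (x₀ : V → α) :
    ∑ x, agreeSum S x w = agreeSum S x₀ 1 * ∑ z, w z := by
  calc ∑ x, agreeSum S x w = ∑ z, w z * agreeSum S z 1 := by
        simp_rw [agreeSum, Finset.mul_sum]
        rw [Finset.sum_comm]
        simp [eq_comm]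
    _ = agreeSum S x₀ 1 * ∑ z, w z := by
        simp_rw [agreeSum_one_eq S _ x₀, Finset.mul_sum, mul_comm]

theorem agreeSum_div_sum_eq_of_agreeSum_eq_mul {S : Set V} {w w' : (V → α) → ℝ} {C : ℝ}
    (hw : ∑ z, w z ≠ 0) (h : ∀ x, agreeSum S x w = C * agreeSum S x w') (x : V → α) :
    agreeSum S x w / ∑ z, w z = agreeSum S x w' / ∑ z, w' z := by
  have htotal : ∑ z, w z = C * ∑ z, w' z := by
    have := sum_agreeSum S w x
    rw [Finset.sum_congr rfl fun y _ => h y, ← Finset.mul_sum, sum_agreeSum S w' x] at this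
    exact mul_left_cancel₀ (agreeSum_one_pos S x).ne' (by linarith)
  have hC : C ≠ 0 := by rintro rfl; simp_all
  rw [h x, htotal, mul_div_mul_left _ _ hC]

end ConfigurationSums

theorem sqrt_mul_mul_exp_atanh_mul_spin {a b : ℝ} (ha : 0 < a) (hb : 0 < b) (c : Bool) :
    √(a * b) * exp (atanh ((a - b) / (a + b)) * spin c) = if c then a else b := by
  have hatanh : atanh ((a - b) / (a + b)) = (log a - log b) / 2 := by
    have hab : a + b ≠ 0 := by positivity
    have hplus : 1 + (a - b) / (a + b) = 2 * a / (a + b) := by field_simp; ring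
    have hminus : 1 - (a - b) / (a + b) = 2 * b / (a + b) := by field_simp; ring
    rw [atanh, hplus, hminus, div_div_div_cancel_right₀ hab, mul_div_mul_left _ _ two_ne_zero,
      log_div ha.ne' hb.ne']
    ring
  have hsqrt : √(a * b) = exp ((log a + log b) / 2) := by
    rw [exp_half, exp_add, exp_log ha, exp_log hb]
  rw [hatanh, hsqrt, ← exp_add]
  cases c
  · simp only [spin, Bool.false_eq_true, if_false]
    convert exp_log hb using 2; ring
  · simp only [spin, if_true]
    convert exp_log ha using 2; ring

section Ising

omit [Fintype V] in
theorem edgeTerm_congr {z z' : V → Bool} {e : Sym2 V} (h : ∀ v ∈ e, z v = z' v) :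
    edgeTerm z e = edgeTerm z' e := by
  induction e with
  | _ a b => simp [edgeTerm, h a (Sym2.mem_mk_left a b), h b (Sym2.mem_mk_right a b)]

theorem ham_onSet_dependsOn (T : SimpleGraph V) (S : Set V) (β : ℝ) {B : V → ℝ}
    (hB : ∀ v ∉ S, B v = 0) : DependsOn (ham (onSet T S) β B) S := fun z z' hzz => by
  have hedge : ∀ e ∈ (onSet T S).edgeFinset, edgeTerm z e = edgeTerm z' e := by
    intro e he
    induction e with
    | _ a b =>
      obtain ⟨-, ha, hb⟩ : (onSet T S).Adj a b := by simpa using he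
      exact edgeTerm_congr fun v hv => by rcases Sym2.mem_iff.mp hv with rfl | rfl <;> simp_all
  have hvertex : ∀ v, B v * spin (z v) = B v * spin (z' v) := fun v => by
    by_cases hv : v ∈ S
    · rw [hzz v hv]
    · simp [hB v hv]
  simp only [ham, Finset.sum_congr rfl hedge, hvertex]

theorem ham_add_field (G : SimpleGraph V) (β : ℝ) (B D : V → ℝ) (x : V → Bool) :
    ham G β (B + D) x = ham G β B x + ∑ v, D v * spin (x v) := by
  simp only [ham, Pi.add_apply, add_mul, Finset.sum_add_distrib]; ring

noncomputable def pinnedZ (G : SimpleGraph V) (β : ℝ) (B : V → ℝ) (u : V) (c : Bool) : ℝ :=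
  ∑ z : V → Bool, if z u = c then exp (ham G β B z) else 0

theorem pinnedZ_pos (G : SimpleGraph V) (β : ℝ) (B : V → ℝ) (u : V) (c : Bool) :
    0 < pinnedZ G β B u c :=
  Finset.sum_pos' (fun z _ => by split_ifs <;> positivity)
    ⟨fun _ => c, Finset.mem_univ _, by simp [exp_pos]⟩

theorem sum_exp_ham_update (G : SimpleGraph V) (β : ℝ) (B : V → ℝ) (u : V) (c : Bool) :
    ∑ z, exp (ham G β B (Function.update z u c)) = 2 * pinnedZ G β B u c := by
  rw [sum_update_eq_card_mul (fun z => exp (ham G β B z)), Fintype.card_bool, Nat.cast_ofNat]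
  rfl

theorem isingExp_spin_eq (G : SimpleGraph V) (β : ℝ) (B : V → ℝ) (u : V) :
    isingExp G β B (fun x => spin (x u))
      = (pinnedZ G β B u true - pinnedZ G β B u false)
        / (pinnedZ G β B u true + pinnedZ G β B u false) := by
  simp only [isingExp, pinnedZ, ← Finset.sum_sub_distrib, ← Finset.sum_add_distrib]
  congr 1 <;> refine Finset.sum_congr rfl fun z _ => ?_ <;> cases z u <;> simp [spin]

theorem pinnedZ_eq_sqrt_mul_exp (G : SimpleGraph V) (β : ℝ) (B : V → ℝ) (u : V) (c : Bool) :
    pinnedZ G β B u c = √(pinnedZ G β B u true * pinnedZ G β B u false)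
      * exp (atanh (isingExp G β B (fun x => spin (x u))) * spin c) := by
  rw [isingExp_spin_eq, sqrt_mul_mul_exp_atanh_mul_spin (pinnedZ_pos ..) (pinnedZ_pos ..)]
  cases c <;> rfl

end Ising

section Branches

omit [Fintype V] in
@[simp]
theorem onSet_adj {T : SimpleGraph V} {S : Set V} {a b : V} :
    (onSet T S).Adj a b ↔ T.Adj a b ∧ a ∈ S ∧ b ∈ S :=
  Iff.rfl

omit [Fintype V] in
theorem onSet_reachable_eq_or_mem {T : SimpleGraph V} {S : Set V} {u v : V}
    (h : (onSet T S).Reachable v u) : v = u ∨ v ∈ S := by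
  obtain ⟨p⟩ := h
  cases p with
  | nil => exact Or.inl rfl
  | cons hadj _ => exact Or.inr hadj.2.1

omit [Fintype V] in
theorem exists_isPath_of_onSet_reachable {T : SimpleGraph V} {S : Set V} {u v : V}
    (h : (onSet T S).Reachable v u) :
    ∃ p : T.Walk v u, p.IsPath ∧ ∀ y ∈ p.support, y = u ∨ y ∈ S := by
  obtain ⟨p, hp⟩ := h.exists_isPath
  have hle : onSet T S ≤ T := fun _ _ h => h.1
  refine ⟨p.mapLe hle, hp.mapLe hle, fun y hy => ?_⟩
  rw [SimpleGraph.Walk.support_mapLe_eq_support] at hy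
  exact onSet_reachable_eq_or_mem ⟨p.dropUntil y hy⟩

omit [Fintype V] in
theorem exists_isPath_of_induce_reachable {T : SimpleGraph V} {S : Set V} {u v : S}
    (h : (T.induce S).Reachable u v) :
    ∃ p : T.Walk u v, p.IsPath ∧ ∀ y ∈ p.support, y ∈ S := by
  obtain ⟨p, hp⟩ := h.exists_isPath
  let f := (SimpleGraph.Embedding.induce (G := T) S).toHom
  refine ⟨p.map f, (SimpleGraph.Walk.isPath_map_iff_of_injective Subtype.val_injective).mpr hp,
    fun y hy => ?_⟩
  obtain ⟨y', -, rfl⟩ := List.mem_map.mp ((p.support_map f) ▸ hy)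
  exact y'.2

theorem disjoint_edgeFinset_onSet (T : SimpleGraph V) {S S' : Set V} (h : (S ∩ S').Subsingleton) :
    Disjoint (onSet T S).edgeFinset (onSet T S').edgeFinset := by
  refine Finset.disjoint_left.mpr fun e he he' => ?_
  induction e with
  | _ a b =>
    simp only [SimpleGraph.mem_edgeFinset, SimpleGraph.mem_edgeSet, onSet_adj] at he he'
    exact he.1.ne (h ⟨he.2.1, he'.2.1⟩ ⟨he.2.2, he'.2.2⟩)

variable (T : SimpleGraph V) (U' : Set V)

/-- The vertex set of `T_u`. -/
noncomputable def branch (u : V) : Finset V :=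
  Finset.univ.filter fun v => (onSet T (U'ᶜ ∪ {u})).Reachable v u

noncomputable def innerBoundary : Finset V :=
  Finset.univ.filter fun u => u ∈ U' ∧ ∃ w, w ∉ U' ∧ T.Adj u w

variable {T U'}

theorem mem_branch {u v : V} : v ∈ branch T U' u ↔ (onSet T (U'ᶜ ∪ {u})).Reachable v u := by
  simp [branch]

theorem mem_innerBoundary {u : V} : u ∈ innerBoundary T U' ↔ u ∈ U' ∧ ∃ w, w ∉ U' ∧ T.Adj u w := by
  simp [innerBoundary]

theorem mem_branch_self (u : V) : u ∈ branch T U' u :=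
  mem_branch.mpr .rfl

theorem eq_of_mem_branch_of_mem {u v : V} (hv : v ∈ branch T U' u) (hvU : v ∈ U') : v = u := by
  rcases onSet_reachable_eq_or_mem (mem_branch.mp hv) with h | h | h
  · exact h
  · exact absurd hvU h
  · exact h

theorem mem_branch_of_adj {u v w : V} (hv : v ∈ branch T U' u) (hadj : T.Adj v w) (hw : w ∉ U') :
    w ∈ branch T U' u := by
  have hv' : v ∈ U'ᶜ ∪ {u} := (onSet_reachable_eq_or_mem (mem_branch.mp hv)).elim Or.inr id
  exact mem_branch.mpr ((onSet_adj.mpr ⟨hadj.symm, Or.inl hw, hv'⟩).reachable.trans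
    (mem_branch.mp hv))

theorem mem_innerBoundary_of_mem_branch {u w : V} (hu : u ∈ U') (hw : w ∉ U')
    (h : w ∈ branch T U' u) : u ∈ innerBoundary T U' := by
  obtain ⟨p⟩ := (mem_branch.mp h).symm
  cases p with
  | nil => exact absurd hu hw
  | cons hadj _ =>
    refine mem_innerBoundary.mpr ⟨hu, _, ?_, hadj.1⟩
    rcases hadj.2.2 with h | h
    · exact h
    · exact absurd h hadj.1.ne'

theorem exists_mem_branch (hT : T.Connected) {u₀ w : V} (hu₀ : u₀ ∈ U') (hw : w ∉ U') :
    ∃ u ∈ U', w ∈ branch T U' u := by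
  obtain ⟨p⟩ := hT.preconnected w u₀
  induction p with
  | nil => exact absurd hu₀ hw
  | @cons w c _ hadj _ ih =>
    by_cases hc : c ∈ U'
    · exact ⟨c, hc, mem_branch_of_adj (mem_branch_self c) hadj.symm hw⟩
    · obtain ⟨u, hu, hcu⟩ := ih hu₀ hc
      exact ⟨u, hu, mem_branch_of_adj hcu hadj.symm hw⟩

/-- Branches hanging off distinct vertices of a connected `U'` are disjoint: otherwise a path
from `w` through `u` to `u'` and the path from `w` avoiding `u` would be two paths of the tree. -/
theorem eq_of_mem_branch_of_mem_branch (hT : T.IsAcyclic) (hconn : (T.induce U').Connected)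
    {u u' w : V} (hu : u ∈ U') (hu' : u' ∈ U') (h : w ∈ branch T U' u) (h' : w ∈ branch T U' u') :
    u = u' := by
  obtain ⟨p, hp, hpU⟩ := exists_isPath_of_onSet_reachable (mem_branch.mp h)
  obtain ⟨p', hp', hp'U⟩ := exists_isPath_of_onSet_reachable (mem_branch.mp h')
  obtain ⟨σ, hσ, hσU⟩ := exists_isPath_of_induce_reachable (hconn ⟨u, hu⟩ ⟨u', hu'⟩)
  have hu_tail : u ∉ σ.support.tail := by
    have := hσ.support_nodup
    rw [← σ.cons_tail_support, List.nodup_cons] at this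
    exact this.1
  have hpσ : (p.append σ).IsPath := by
    rw [SimpleGraph.Walk.isPath_def, SimpleGraph.Walk.support_append, List.nodup_append]
    refine ⟨hp.support_nodup, hσ.support_nodup.sublist (List.tail_sublist _),
      fun a ha b hb hab => ?_⟩
    subst hab
    rcases hpU a ha with rfl | ha' | rfl
    · exact hu_tail hb
    · exact ha' (hσU a (List.mem_of_mem_tail hb))
    · exact hu_tail hb
  have hsame : p.append σ = p' :=
    congrArg Subtype.val ((hT.subsingleton_path w u').elim ⟨_, hpσ⟩ ⟨p', hp'⟩)
  have hu_mem : u ∈ p'.support :=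
    hsame ▸ (SimpleGraph.Walk.mem_support_append_iff _ _).mpr (Or.inl p.end_mem_support)
  rcases hp'U u hu_mem with h | h | h
  · exact h
  · exact absurd hu h
  · exact h

theorem pairwiseDisjoint_branch (hT : T.IsAcyclic) (hconn : (T.induce U').Connected) :
    U'.PairwiseDisjoint (branch T U') := fun _ hu _ hu' hne =>
  Finset.disjoint_left.mpr fun _ hv hv' =>
    hne (eq_of_mem_branch_of_mem_branch hT hconn hu hu' hv hv')

theorem innerBoundary_subset : (innerBoundary T U' : Set V) ⊆ U' := fun _ hu =>
  (mem_innerBoundary.mp hu).1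

theorem exists_mem_innerBoundary_of_adj (hT : T.IsTree) (hconn : (T.induce U').Connected)
    {a b : V} (hab : T.Adj a b) (ha : a ∉ U') :
    ∃ u ∈ innerBoundary T U', a ∈ branch T U' u ∧ b ∈ branch T U' u := by
  obtain ⟨⟨u₀, hu₀⟩⟩ := hconn.nonempty
  obtain ⟨u, hu, hau⟩ := exists_mem_branch hT.connected hu₀ ha
  refine ⟨u, mem_innerBoundary_of_mem_branch hu ha hau, hau, ?_⟩
  by_cases hb : b ∈ U'
  · have hba : a ∈ branch T U' b := mem_branch_of_adj (mem_branch_self b) hab.symm ha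
    rw [eq_of_mem_branch_of_mem_branch hT.isAcyclic hconn hb hu hba hau]
    exact mem_branch_self u
  · exact mem_branch_of_adj hau hab hb

theorem sum_edgeFinset_eq_add_sum_branch (hT : T.IsTree) (hconn : (T.induce U').Connected)
    (F : Sym2 V → ℝ) :
    ∑ e ∈ T.edgeFinset, F e = ∑ e ∈ (onSet T U').edgeFinset, F e
      + ∑ u ∈ innerBoundary T U', ∑ e ∈ (onSet T (branch T U' u)).edgeFinset, F e := by
  have hcover : T.edgeFinset = (onSet T U').edgeFinset
      ∪ (innerBoundary T U').biUnion fun u => (onSet T (branch T U' u)).edgeFinset := by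
    ext e
    induction e with
    | _ a b =>
      simp only [Finset.mem_union, Finset.mem_biUnion, SimpleGraph.mem_edgeFinset,
        SimpleGraph.mem_edgeSet, onSet_adj, Finset.mem_coe]
      refine ⟨fun hab => ?_, by rintro (⟨hab, -⟩ | ⟨_, _, hab, -⟩) <;> exact hab⟩
      by_cases ha : a ∈ U'
      · by_cases hb : b ∈ U'
        · exact Or.inl ⟨hab, ha, hb⟩
        · obtain ⟨u, hu, hbu, hau⟩ := exists_mem_innerBoundary_of_adj hT hconn hab.symm hb
          exact Or.inr ⟨u, hu, hab, hau, hbu⟩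
      · obtain ⟨u, hu, hau, hbu⟩ := exists_mem_innerBoundary_of_adj hT hconn hab ha
        exact Or.inr ⟨u, hu, hab, hau, hbu⟩
  have hdisj : Disjoint (onSet T U').edgeFinset
      ((innerBoundary T U').biUnion fun u => (onSet T (branch T U' u)).edgeFinset) :=
    (Finset.disjoint_biUnion_right _ _ _).mpr fun _ _ =>
      disjoint_edgeFinset_onSet T fun a ha b hb =>
        (eq_of_mem_branch_of_mem ha.2 ha.1).trans (eq_of_mem_branch_of_mem hb.2 hb.1).symm
  rw [hcover, Finset.sum_union hdisj, Finset.sum_biUnion]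
  intro u hu u' hu' hne
  refine disjoint_edgeFinset_onSet T fun a ha _ _ => ?_
  exact (Finset.disjoint_left.mp (pairwiseDisjoint_branch hT.isAcyclic hconn
    (innerBoundary_subset hu) (innerBoundary_subset hu') hne) ha.1 ha.2).elim

/-- The vertices outside `U'` are partitioned by the branches `T_u` minus their roots. -/
theorem sum_eq_sum_indicator_add_sum_branch (hT : T.IsTree) (hconn : (T.induce U').Connected)
    (f : V → ℝ) :
    ∑ v, f v = ∑ v, U'.indicator f v
      + ∑ u ∈ innerBoundary T U', (∑ v ∈ branch T U' u, f v - f u) := by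
  have hcover : Finset.univ.filter (· ∉ U')
      = (innerBoundary T U').biUnion fun u => (branch T U' u).erase u := by
    ext v
    simp only [Finset.mem_filter, Finset.mem_univ, true_and, Finset.mem_biUnion, Finset.mem_erase]
    refine ⟨fun hv => ?_, fun ⟨u, _, hvu, hv⟩ hvU => hvu (eq_of_mem_branch_of_mem hv hvU)⟩
    obtain ⟨⟨u₀, hu₀⟩⟩ := hconn.nonempty
    obtain ⟨u, hu, hvu⟩ := exists_mem_branch hT.connected hu₀ hv
    exact ⟨u, mem_innerBoundary_of_mem_branch hu hv hvu, ne_of_mem_of_not_mem hu hv |>.symm, hvu⟩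
  have hdisj : (innerBoundary T U' : Set V).PairwiseDisjoint fun u => (branch T U' u).erase u :=
    ((pairwiseDisjoint_branch hT.isAcyclic hconn).subset innerBoundary_subset).mono
      fun _ => Finset.erase_subset _ _
  rw [← Finset.sum_filter_add_sum_filter_not Finset.univ (· ∈ U'), hcover,
    Finset.sum_biUnion hdisj, Finset.sum_filter]
  simp only [Set.indicator_apply, Finset.sum_erase_eq_sub (mem_branch_self _)]

theorem compAt_onSet_eq_onSet_branch (u : V) :
    compAt (onSet T (U'ᶜ ∪ {u})) u = onSet T (branch T U' u) := by
  ext a b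
  simp only [compAt, onSet_adj, mem_branch, Finset.mem_coe]
  refine ⟨fun ⟨⟨hab, _⟩, ha, hb⟩ => ⟨hab, ha, hb⟩, fun ⟨hab, ha, hb⟩ => ⟨⟨hab, ?_, ?_⟩, ha, hb⟩⟩
  · exact (onSet_reachable_eq_or_mem ha).elim Or.inr id
  · exact (onSet_reachable_eq_or_mem hb).elim Or.inr id

end Branches

section Marginal

variable (T : SimpleGraph V) (β : ℝ) (B : V → ℝ) (U' : Set V)

/-- The field `B'` of the statement. -/
noncomputable def marginalField : V → ℝ := fun u =>
  if u ∈ U' then (if ∃ w, w ∉ U' ∧ T.Adj u w then atanh (bdryMag T β B U' u) else B u) else 0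

/-- Leaves out the field at the root `u`, which `T[U']` carries. -/
noncomputable def branchWeight (u : V) (c : Bool) (z : V → Bool) : ℝ :=
  exp (ham (onSet T (branch T U' u)) β ((branch T U' u : Set V).indicator B)
    (Function.update z u c) - B u * spin c)

/-- `Z_u(c)`: the partition function of the branch `T_u` with its root spin pinned to `c`. -/
noncomputable def branchZ (u : V) (c : Bool) : ℝ :=
  pinnedZ (onSet T (branch T U' u)) β ((branch T U' u : Set V).indicator B) u c

theorem ham_onSet_marginalField (x : V → Bool) :
    ham (onSet T U') β (marginalField T β B U') x = ham (onSet T U') β (U'.indicator B) x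
      + ∑ u ∈ innerBoundary T U', (atanh (bdryMag T β B U' u) - B u) * spin (x u) := by
  have hfield : marginalField T β B U' = U'.indicator B + fun u =>
      if u ∈ innerBoundary T U' then atanh (bdryMag T β B U' u) - B u else 0 := by
    funext u
    by_cases hu : u ∈ U' <;> by_cases hb : ∃ w, w ∉ U' ∧ T.Adj u w <;>
      simp [marginalField, mem_innerBoundary, hu, hb]
  rw [hfield, ham_add_field]
  simp [ite_mul, Finset.sum_ite_mem]

theorem bdryMag_eq_isingExp_branch (u : V) :
    bdryMag T β B U' u = isingExp (onSet T (branch T U' u)) β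
      ((branch T U' u : Set V).indicator B) (fun x => spin (x u)) := by
  rw [bdryMag, compAt_onSet_eq_onSet_branch]
  congr 1
  funext v
  simp [Set.indicator_apply, mem_branch]

theorem ham_eq_ham_onSet_add_sum_branch (hT : T.IsTree) (hconn : (T.induce U').Connected)
    (z : V → Bool) :
    ham T β B z = ham (onSet T U') β (U'.indicator B) z
      + ∑ u ∈ innerBoundary T U', (ham (onSet T (branch T U' u)) β
          ((branch T U' u : Set V).indicator B) z - B u * spin (z u)) := by
  have hrestrict : ∀ S : Finset V,
      ∑ v, (S : Set V).indicator B v * spin (z v) = ∑ v ∈ S, B v * spin (z v) := fun S =>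
    Finset.sum_indicator_subset_of_eq_zero B (fun v b => b * spin (z v))
      (Finset.subset_univ S) fun _ => zero_mul _
  simp only [ham, sum_edgeFinset_eq_add_sum_branch hT hconn, hrestrict]
  rw [sum_eq_sum_indicator_add_sum_branch hT hconn fun v => B v * spin (z v)]
  simp only [Set.indicator_mul_left, Finset.sum_sub_distrib, Finset.sum_add_distrib,
    ← Finset.mul_sum]
  ring

theorem branchWeight_dependsOn (u : V) (c : Bool) :
    DependsOn (branchWeight T β B U' u c) ((branch T U' u).erase u : Finset V) := by
  have hham := (ham_onSet_dependsOn T (branch T U' u) β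
    fun v hv => Set.indicator_of_notMem hv B).update u c
  exact fun z z' hzz => by simp only [branchWeight, hham hzz]

theorem sum_branchWeight (u : V) (c : Bool) :
    ∑ z, branchWeight T β B U' u c z
      = 2 * √(branchZ T β B U' u true * branchZ T β B U' u false)
        * exp ((atanh (bdryMag T β B U' u) - B u) * spin c) := by
  simp only [branchWeight, branchZ, exp_sub, ← Finset.sum_div]
  rw [sum_exp_ham_update, pinnedZ_eq_sqrt_mul_exp, ← bdryMag_eq_isingExp_branch, sub_mul,
    exp_sub]
  ring

theorem agreeSum_exp_ham_eq (hT : T.IsTree) (hconn : (T.induce U').Connected) (x : V → Bool) :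
    agreeSum U' x (fun z => exp (ham T β B z))
      = exp (ham (onSet T U') β (U'.indicator B) x)
        * agreeSum U' x (fun z => ∏ u ∈ innerBoundary T U', branchWeight T β B U' u (x u) z) := by
  have hdep : DependsOn (fun z => exp (ham (onSet T U') β (U'.indicator B) z)) U' :=
    fun _ _ hzz => congrArg exp
      (ham_onSet_dependsOn T U' β (fun _ hv => Set.indicator_of_notMem hv B) hzz)
  rw [← agreeSum_mul_of_dependsOn hdep]
  refine agreeSum_congr fun z hz => ?_
  rw [ham_eq_ham_onSet_add_sum_branch T β B U' hT hconn, exp_add, exp_sum]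
  congr 1
  refine Finset.prod_congr rfl fun u hu => ?_
  rw [branchWeight, ← hz u (innerBoundary_subset hu), Function.update_eq_self]

/-- The branches hang off disjoint sets of vertices outside `U'`, so under the uniform measure
their weights are independent of each other and of the spins on `U'`. -/
theorem card_pow_mul_agreeSum_prod_branchWeight (hT : T.IsTree)
    (hconn : (T.induce U').Connected) (x : V → Bool) :
    (Fintype.card (V → Bool) : ℝ) ^ (innerBoundary T U').card
        * agreeSum U' x (fun z => ∏ u ∈ innerBoundary T U', branchWeight T β B U' u (x u) z)
      = agreeSum U' x 1 * ∏ u ∈ innerBoundary T U', ∑ z, branchWeight T β B U' u (x u) z := by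
  have hdisj : (innerBoundary T U' : Set V).PairwiseDisjoint
      fun u => (((branch T U' u).erase u : Finset V) : Set V) :=
    fun u hu u' hu' hne => Finset.disjoint_coe.mpr <|
      (pairwiseDisjoint_branch hT.isAcyclic hconn (innerBoundary_subset hu)
        (innerBoundary_subset hu') hne).mono (Finset.erase_subset _ _) (Finset.erase_subset _ _)
  have hprod := card_pow_mul_sum_prod _ hdisj fun u _ => branchWeight_dependsOn T β B U' u (x u)
  have hcompl : DependsOn (fun z => ∏ u ∈ innerBoundary T U', branchWeight T β B U' u (x u) z)
      U'ᶜ := DependsOn.finset_prod fun u _ => (branchWeight_dependsOn T β B U' u (x u)).mono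
        fun v hv hvU => (Finset.mem_erase.mp hv).1
          (eq_of_mem_branch_of_mem (Finset.mem_erase.mp hv).2 hvU)
  have hagree := card_mul_agreeSum_of_dependsOn_compl hcompl x
  have hN : (0 : ℝ) < Fintype.card (V → Bool) := by positivity
  refine mul_left_cancel₀ hN.ne' ?_
  rw [mul_left_comm, hagree, mul_left_comm, hprod]
  ring

theorem agreeSum_exp_ham_eq_mul (hT : T.IsTree) (hconn : (T.induce U').Connected) :
    ∃ C, ∀ x, agreeSum U' x (fun z => exp (ham T β B z))
      = C * agreeSum U' x (fun z => exp (ham (onSet T U') β (marginalField T β B U') z)) := by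
  refine ⟨(∏ u ∈ innerBoundary T U', 2 * √(branchZ T β B U' u true * branchZ T β B U' u false))
    / (Fintype.card (V → Bool) : ℝ) ^ (innerBoundary T U').card, fun x => ?_⟩
  have hdep : DependsOn (fun z => exp (ham (onSet T U') β (marginalField T β B U') z)) U' :=
    fun _ _ hzz => congrArg exp
      (ham_onSet_dependsOn T U' β (fun v hv => by simp [marginalField, hv]) hzz)
  have hmarg := agreeSum_mul_of_dependsOn hdep x 1
  have hbranch := card_pow_mul_agreeSum_prod_branchWeight T β B U' hT hconn x
  simp only [Pi.one_apply, mul_one] at hmarg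
  rw [Finset.prod_congr rfl fun u _ => sum_branchWeight T β B U' u (x u),
    Finset.prod_mul_distrib] at hbranch
  rw [agreeSum_exp_ham_eq T β B U' hT hconn, hmarg, ham_onSet_marginalField, exp_add, exp_sum]
  field_simp
  linear_combination hbranch

end Marginal

theorem tree_marginal_is_ising_general (T : SimpleGraph V) (hT : T.IsTree)
    (β : ℝ) (B : V → ℝ) (U' : Set V)
    (hconn : ((T.induce U')).Connected) :
    ∀ x : V → Bool,
      isingProbAgree T β B U' x =
        isingProbAgree (onSet T U') β
          (fun u => if u ∈ U' then
              (if ∃ w, w ∉ U' ∧ T.Adj u w then atanh (bdryMag T β B U' u) else B u)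
            else 0)
          U' x := by
  obtain ⟨C, hC⟩ := agreeSum_exp_ham_eq_mul T β B U' hT hconn
  exact agreeSum_div_sum_eq_of_agreeSum_eq_mul
    (Finset.sum_pos (fun _ _ => exp_pos _) Finset.univ_nonempty).ne' hC

/-- **Marginal of an Ising measure on a tree** (Proposition: marginals on a
connected subset `U'` of a finite tree).  The marginal of `ν^{β,B}_T` on
`{-1,+1}^{U'}` is the Ising measure on the induced subgraph `T[U']` with
inverse temperature `β` and fields `B'_u = atanh(⟨x_u⟩_W)` on the inner
boundary `∂_*U'` and `B'_u = B_u` elsewhere on `U'`. -/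
theorem tree_marginal_is_ising (T : SimpleGraph V) (hT : T.IsTree)
    (β : ℝ) (hβ : 0 ≤ β) (B : V → ℝ) (U' : Set V)
    (hconn : ((T.induce U')).Connected) :
    ∀ x : V → Bool,
      isingProbAgree T β B U' x =
        isingProbAgree (onSet T U') β
          (fun u => if u ∈ U' then
              (if ∃ w, w ∉ U' ∧ T.Adj u w then atanh (bdryMag T β B U' u) else B u)
            else 0)
          U' x :=
  tree_marginal_is_ising_general T hT β B U' hconn
end
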